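/- arXiv:2406.01200 — 3 statements merged into one kernel-verified Lean document; each statement's English description precedes it below -/
import Mathlib

section
/- (Dobinski-like formula) For every integer $n \ge 0$ and every real number $x$, the series $\sum_{k=0}^{\infty}\frac{x^k}{k!}E[\langle S_k\rangle_n]$ converges absolutely and $B_n^{(L,Y)}(x) = e^{-x}\sum_{k=0}^{\infty}\frac{x^k}{k!}E\big[\langle S_k\rangle_n\big]$. -/
open MeasureTheory ProbabilityTheory Finset

/-- The rising factorial `⟨x⟩_n = x (x+1) ⋯ (x+n-1)`, with `⟨x⟩_0 = 1`. -/
noncomputable def asc (x : ℝ) : ℕ → ℝ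
  | 0 => 1
  | n + 1 => asc x n * (x + n)

/-- The probabilistic Lah numbers associated with the random variable `Y`, defined from
the iid copies `Ys` of `Y` via `L_Y(n,k) = (1/k!) ∑_{l=0}^k C(k,l) (-1)^{k-l} E[⟨S_l⟩_n]`,
where `S_l = Y_1 + ⋯ + Y_l`. -/
noncomputable def probLah {Ω : Type*} [MeasurableSpace Ω] (μ : Measure Ω)
    (Ys : ℕ → Ω → ℝ) (n k : ℕ) : ℝ :=
  (k.factorial : ℝ)⁻¹ * ∑ l ∈ Finset.range (k + 1),
    (k.choose l : ℝ) * (-1) ^ (k - l) * ∫ ω, asc (∑ j ∈ Finset.range l, Ys j ω) n ∂μ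

/-- The probabilistic Lah-Bell polynomials `B_n^{(L,Y)}(x) = ∑_{k=0}^n L_Y(n,k) x^k`. -/
noncomputable def probLahBell {Ω : Type*} [MeasurableSpace Ω] (μ : Measure Ω)
    (Ys : ℕ → Ω → ℝ) (n : ℕ) (x : ℝ) : ℝ :=
  ∑ k ∈ Finset.range (n + 1), probLah μ Ys n k * x ^ k

/-!
Write `a l = E[⟨S_l⟩_n]`. By independence, `E[S_{l+1}^m] - E[S_l^m]` is a combination of the
lower moments `E[S_l^i]`, `i < m`, so `Δ^{m+1}` kills `l ↦ E[S_l^m]`, and hence `Δ^{n+1} a = 0`.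
Newton's formula then gives `a k = ∑_{j ≤ n} C(k, j) Δ^j a 0`, while `L_Y(n, k) = Δ^k a 0 / k!`.
Since `∑_k C(k, j) x^k / k! = e^x x^j / j!`, the series `∑_k x^k a k / k!` converges absolutely
to `e^x B_n^{(L,Y)}(x)`.
-/

section FiniteDifferences

variable {M G : Type*} [AddCommMonoid M] [AddCommGroup G] (h : M)

lemma fwdDiff_iter_eq_zero_of_le {f : M → G} {d k : ℕ} (hf : (fwdDiff h)^[d] f = 0)
    (hdk : d ≤ k) : (fwdDiff h)^[k] f = 0 := by
  obtain ⟨e, rfl⟩ := Nat.exists_eq_add_of_le hdk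
  rw [add_comm, Function.iterate_add_apply, hf]
  exact Function.iterate_fixed (fwdDiff_const h 0) e

lemma fwdDiff_iter_succ_eq_zero_of_fwdDiff_eq_sum {R : Type*} [Monoid R]
    [DistribMulAction R G] (f : ℕ → M → G) (c : ℕ → ℕ → R)
    (hf : ∀ m, fwdDiff h (f m) = ∑ j ∈ range m, c m j • f j) (m : ℕ) :
    (fwdDiff h)^[m + 1] (f m) = 0 := by
  induction m using Nat.strong_induction_on with
  | _ m ih =>
    rw [Function.iterate_succ_apply, hf, fwdDiff_iter_finsetSum]
    refine sum_eq_zero fun j hj => ?_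
    rw [fwdDiff_iter_const_smul, fwdDiff_iter_eq_zero_of_le h (ih j (mem_range.1 hj))
      (mem_range.1 hj), smul_zero]

lemma eq_sum_choose_smul_fwdDiff_iter_of_fwdDiff_iter_eq_zero {f : ℕ → G} {n : ℕ}
    (hf : (fwdDiff 1)^[n + 1] f = 0) (k : ℕ) :
    f k = ∑ j ∈ range (n + 1), k.choose j • (fwdDiff 1)^[j] f 0 := by
  have hnewton := shift_eq_sum_fwdDiff_iter 1 f k 0
  rw [zero_add, smul_eq_mul, mul_one] at hnewton
  rw [hnewton, sum_subset (range_subset_range.2 (Nat.le_add_right (k + 1) n)),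
    sum_subset (range_subset_range.2 (by omega : n + 1 ≤ k + 1 + n))]
  · intro j _ hj
    rw [fwdDiff_iter_eq_zero_of_le 1 hf (by simpa using hj), Pi.zero_apply, smul_zero]
  · intro j _ hj
    rw [Nat.choose_eq_zero_of_lt (by simpa using hj), zero_smul]

end FiniteDifferences

lemma hasSum_choose_mul_pow_div_factorial (j : ℕ) (x : ℝ) :
    HasSum (fun k => k.choose j * x ^ k / k.factorial) (x ^ j / j.factorial * Real.exp x) := by
  refine (hasSum_nat_add_iff' j).1 ?_
  have hlow : ∑ k ∈ range j, (k.choose j * x ^ k / k.factorial : ℝ) = 0 :=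
    sum_eq_zero fun k hk => by rw [Nat.choose_eq_zero_of_lt (mem_range.1 hk)]; simp
  rw [hlow, sub_zero, Real.exp_eq_exp_ℝ]
  have hterm (i : ℕ) : ((i + j).choose j * x ^ (i + j) / (i + j).factorial : ℝ) =
      x ^ j / j.factorial * (x ^ i / i.factorial) := by
    rw [Nat.cast_choose ℝ (Nat.le_add_left j i), Nat.add_sub_cancel, pow_add]
    field_simp
  simp_rw [hterm]
  exact (NormedSpace.expSeries_div_hasSum_exp x).mul_left _

lemma hasSum_pow_div_factorial_mul_of_fwdDiff_iter_eq_zero {f : ℕ → ℝ} {n : ℕ}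
    (hf : (fwdDiff 1)^[n + 1] f = 0) (x : ℝ) :
    HasSum (fun k => x ^ k / k.factorial * f k)
      (Real.exp x * ∑ j ∈ range (n + 1), x ^ j / j.factorial * (fwdDiff 1)^[j] f 0) := by
  have hterms := hasSum_sum fun j (_ : j ∈ range (n + 1)) =>
    (hasSum_choose_mul_pow_div_factorial j x).mul_left ((fwdDiff 1)^[j] f 0)
  have hterm (k : ℕ) : x ^ k / k.factorial * f k =
      ∑ j ∈ range (n + 1), (fwdDiff 1)^[j] f 0 * (k.choose j * x ^ k / k.factorial) := by
    rw [eq_sum_choose_smul_fwdDiff_iter_of_fwdDiff_iter_eq_zero hf k, mul_sum]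
    exact sum_congr rfl fun j _ => by rw [nsmul_eq_mul]; ring
  have hsum : Real.exp x * ∑ j ∈ range (n + 1), x ^ j / j.factorial * (fwdDiff 1)^[j] f 0 =
      ∑ j ∈ range (n + 1), (fwdDiff 1)^[j] f 0 * (x ^ j / j.factorial * Real.exp x) := by
    rw [mul_sum]
    exact sum_congr rfl fun j _ => by ring
  simp_rw [hterm, hsum]
  exact hterms

lemma asc_eq_ascPochhammer_eval (x : ℝ) (n : ℕ) : asc x n = (ascPochhammer ℝ n).eval x := by
  induction n with
  | zero => simp [asc]
  | succ n ih => rw [asc, ascPochhammer_succ_eval, ih]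

lemma probLah_eq_fwdDiff_iter {Ω : Type*} [MeasurableSpace Ω] (μ : Measure Ω)
    (Ys : ℕ → Ω → ℝ) (n k : ℕ) :
    probLah μ Ys n k = (k.factorial : ℝ)⁻¹ *
      (fwdDiff 1)^[k] (fun l => ∫ ω, asc (∑ j ∈ range l, Ys j ω) n ∂μ) 0 := by
  rw [probLah, fwdDiff_iter_eq_sum_shift]
  congr 1
  refine sum_congr rfl fun l _ => ?_
  simp only [zero_add, smul_eq_mul, mul_one, zsmul_eq_mul]
  push_cast
  ring

lemma pow_sum_range_succ (a : ℕ → ℝ) (l m : ℕ) :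
    (∑ j ∈ range (l + 1), a j) ^ m =
      ∑ i ∈ range (m + 1), (∑ j ∈ range l, a j) ^ i * a l ^ (m - i) * m.choose i := by
  rw [sum_range_succ, add_pow]

lemma ProbabilityTheory.IdentDistrib.integrable_pow {α β : Type*} [MeasurableSpace α]
    [MeasurableSpace β] {μ : Measure α} {ν : Measure β} {X : α → ℝ} {Y : β → ℝ}
    (h : IdentDistrib X Y μ ν) {q : ℕ} (hY : Integrable (fun ω => Y ω ^ q) ν) :
    Integrable (fun ω => X ω ^ q) μ :=
  (h.comp (measurable_id.pow_const q)).integrable_iff.2 hY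

lemma ProbabilityTheory.IdentDistrib.integral_pow_eq {α β : Type*} [MeasurableSpace α]
    [MeasurableSpace β] {μ : Measure α} {ν : Measure β} {X : α → ℝ} {Y : β → ℝ}
    (h : IdentDistrib X Y μ ν) (q : ℕ) : ∫ ω, X ω ^ q ∂μ = ∫ ω, Y ω ^ q ∂ν :=
  (h.comp (measurable_id.pow_const q)).integral_eq

section PartialSumMoments

variable {Ω : Type*} [MeasurableSpace Ω] {μ : Measure Ω} {Y : Ω → ℝ} {Ys : ℕ → Ω → ℝ}

lemma indepFun_pow_sum_range_pow (hmeas : ∀ j, AEMeasurable (Ys j) μ) (hindep : iIndepFun Ys μ)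
    (l p q : ℕ) :
    IndepFun (fun ω => (∑ j ∈ range l, Ys j ω) ^ p) (fun ω => Ys l ω ^ q) μ := by
  have hsum : IndepFun (fun ω => ∑ j ∈ range l, Ys j ω) (Ys l) μ := by
    simpa only [← Finset.sum_apply] using hindep.indepFun_sum_range_succ₀ hmeas l
  exact hsum.comp (measurable_id.pow_const p) (measurable_id.pow_const q)

lemma integrable_pow_sum_range_mul_pow (hid : ∀ j, IdentDistrib (Ys j) Y μ μ)
    (hindep : iIndepFun Ys μ) (hmom : ∀ m : ℕ, Integrable (fun ω => Y ω ^ m) μ) {l p : ℕ}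
    (hS : Integrable (fun ω => (∑ j ∈ range l, Ys j ω) ^ p) μ) (q : ℕ) :
    Integrable (fun ω => (∑ j ∈ range l, Ys j ω) ^ p * Ys l ω ^ q) μ :=
  (indepFun_pow_sum_range_pow (fun j => (hid j).aemeasurable_fst) hindep l p q).integrable_mul
    hS ((hid l).integrable_pow (hmom q))

lemma integrable_pow_sum_range [IsFiniteMeasure μ] (hid : ∀ j, IdentDistrib (Ys j) Y μ μ)
    (hindep : iIndepFun Ys μ) (hmom : ∀ m : ℕ, Integrable (fun ω => Y ω ^ m) μ) (l m : ℕ) :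
    Integrable (fun ω => (∑ j ∈ range l, Ys j ω) ^ m) μ := by
  induction l generalizing m with
  | zero => simp
  | succ l ih =>
    simp_rw [pow_sum_range_succ]
    exact integrable_finsetSum _ fun i _ =>
      (integrable_pow_sum_range_mul_pow hid hindep hmom (ih i) (m - i)).mul_const _

lemma integral_pow_sum_range_succ [IsFiniteMeasure μ] (hid : ∀ j, IdentDistrib (Ys j) Y μ μ)
    (hindep : iIndepFun Ys μ) (hmom : ∀ m : ℕ, Integrable (fun ω => Y ω ^ m) μ) (l m : ℕ) :
    ∫ ω, (∑ j ∈ range (l + 1), Ys j ω) ^ m ∂μ =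
      ∑ i ∈ range (m + 1), (m.choose i * ∫ ω, Y ω ^ (m - i) ∂μ) *
        ∫ ω, (∑ j ∈ range l, Ys j ω) ^ i ∂μ := by
  have hS := integrable_pow_sum_range hid hindep hmom l
  simp_rw [pow_sum_range_succ]
  rw [integral_finsetSum _ fun i _ =>
    (integrable_pow_sum_range_mul_pow hid hindep hmom (hS i) (m - i)).mul_const _]
  refine sum_congr rfl fun i _ => ?_
  have hind := indepFun_pow_sum_range_pow (fun j => (hid j).aemeasurable_fst) hindep l i (m - i)
  rw [integral_mul_const, hind.integral_fun_mul_eq_mul_integral (hS i).aestronglyMeasurable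
    ((hid l).integrable_pow (hmom _)).aestronglyMeasurable, (hid l).integral_pow_eq]
  ring

lemma fwdDiff_iter_integral_pow_sum_range [IsProbabilityMeasure μ]
    (hid : ∀ j, IdentDistrib (Ys j) Y μ μ) (hindep : iIndepFun Ys μ)
    (hmom : ∀ m : ℕ, Integrable (fun ω => Y ω ^ m) μ) (m : ℕ) :
    (fwdDiff 1)^[m + 1] (fun l => ∫ ω, (∑ j ∈ range l, Ys j ω) ^ m ∂μ) = 0 := by
  refine fwdDiff_iter_succ_eq_zero_of_fwdDiff_eq_sum 1
    (fun m l => ∫ ω, (∑ j ∈ range l, Ys j ω) ^ m ∂μ)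
    (fun m i => (m.choose i * ∫ ω, Y ω ^ (m - i) ∂μ : ℝ)) (fun m => funext fun l => ?_) m
  -- the top term `i = m` is `E[Y ^ 0] E[S_l ^ m] = E[S_l ^ m]`, which the difference cancels
  rw [fwdDiff, integral_pow_sum_range_succ hid hindep hmom, sum_range_succ]
  simp

lemma fwdDiff_iter_integral_eval_sum_range [IsProbabilityMeasure μ]
    (hid : ∀ j, IdentDistrib (Ys j) Y μ μ) (hindep : iIndepFun Ys μ)
    (hmom : ∀ m : ℕ, Integrable (fun ω => Y ω ^ m) μ) (P : Polynomial ℝ) :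
    (fwdDiff 1)^[P.natDegree + 1] (fun l => ∫ ω, P.eval (∑ j ∈ range l, Ys j ω) ∂μ) = 0 := by
  have hexpand : (fun l => ∫ ω, P.eval (∑ j ∈ range l, Ys j ω) ∂μ) =
      ∑ i ∈ range (P.natDegree + 1),
        P.coeff i • fun l => ∫ ω, (∑ j ∈ range l, Ys j ω) ^ i ∂μ := by
    funext l
    simp only [Polynomial.eval_eq_sum_range, Finset.sum_apply, Pi.smul_apply, smul_eq_mul]
    rw [integral_finsetSum _ fun i _ =>
      (integrable_pow_sum_range hid hindep hmom l i).const_mul _]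
    exact sum_congr rfl fun i _ => integral_const_mul _ _
  rw [hexpand, fwdDiff_iter_finsetSum]
  refine sum_eq_zero fun i hi => ?_
  rw [fwdDiff_iter_const_smul, fwdDiff_iter_eq_zero_of_le 1
    (fwdDiff_iter_integral_pow_sum_range hid hindep hmom i) (by simpa using hi), smul_zero]

end PartialSumMoments

theorem statement_3_general {Ω : Type*} [MeasurableSpace Ω] (μ : Measure Ω) [IsProbabilityMeasure μ]
    (Y : Ω → ℝ) (Ys : ℕ → Ω → ℝ)
    (hid : ∀ j, IdentDistrib (Ys j) Y μ μ)
    (hindep : iIndepFun Ys μ)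
    (r : ℝ) (hr : 0 < r)
    (hmgf : ∀ t : ℝ, |t| < r → Integrable (fun ω => Real.exp (t * Y ω)) μ)
    (n : ℕ) (x : ℝ) :
    Summable (fun k : ℕ =>
      |x ^ k / k.factorial * ∫ ω, asc (∑ j ∈ Finset.range k, Ys j ω) n ∂μ|) ∧
    probLahBell μ Ys n x = Real.exp (-x) *
      ∑' k : ℕ, x ^ k / k.factorial * ∫ ω, asc (∑ j ∈ Finset.range k, Ys j ω) n ∂μ := by
  have hmom : ∀ m : ℕ, Integrable (fun ω => Y ω ^ m) μ :=
    integrable_pow_of_integrable_exp_mul (half_pos hr).ne'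
      (hmgf _ (by rw [abs_of_pos (half_pos hr)]; linarith))
      (hmgf _ (by rw [abs_neg, abs_of_pos (half_pos hr)]; linarith))
  have hpoly : (fwdDiff 1)^[n + 1] (fun l => ∫ ω, asc (∑ j ∈ range l, Ys j ω) n ∂μ) = 0 := by
    simpa only [asc_eq_ascPochhammer_eval, ascPochhammer_natDegree] using
      fwdDiff_iter_integral_eval_sum_range hid hindep hmom (ascPochhammer ℝ n)
  have hseries := hasSum_pow_div_factorial_mul_of_fwdDiff_iter_eq_zero hpoly x
  refine ⟨hseries.summable.abs, ?_⟩
  rw [hseries.tsum_eq, ← mul_assoc, ← Real.exp_add, neg_add_cancel, Real.exp_zero, one_mul,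
    probLahBell]
  refine sum_congr rfl fun k _ => ?_
  rw [probLah_eq_fwdDiff_iter]
  ring

theorem statement_3 {Ω : Type*} [MeasurableSpace Ω] (μ : Measure Ω) [IsProbabilityMeasure μ]
    (Y : Ω → ℝ) (Ys : ℕ → Ω → ℝ)
    (hY : Measurable Y) (hYs : ∀ j, Measurable (Ys j))
    (hid : ∀ j, IdentDistrib (Ys j) Y μ μ)
    (hindep : iIndepFun Ys μ)
    (r : ℝ) (hr : 0 < r)
    (hmgf : ∀ t : ℝ, |t| < r → Integrable (fun ω => Real.exp (t * Y ω)) μ)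
    (n : ℕ) (x : ℝ) :
    Summable (fun k : ℕ =>
      |x ^ k / k.factorial * ∫ ω, asc (∑ j ∈ Finset.range k, Ys j ω) n ∂μ|) ∧
    probLahBell μ Ys n x = Real.exp (-x) *
      ∑' k : ℕ, x ^ k / k.factorial * ∫ ω, asc (∑ j ∈ Finset.range k, Ys j ω) n ∂μ :=
  statement_3_general μ Y Ys hid hindep r hr hmgf n x
end

section
/- (Recurrence relation) For every integer $n \ge 0$ and every real number $x$, $B_{n+1}^{(L,Y)}(x) = x\sum_{k=0}^{n}\binom{n}{k} E\big[\langle Y\rangle_{k+1}\big] B_{n-k}^{(L,Y)}(x)$. -/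
open MeasureTheory ProbabilityTheory Finset

lemma asc_succ_eq_mul_asc_add_one (x : ℝ) : ∀ n, asc x (n + 1) = x * asc (x + 1) n
  | 0 => by simp [asc]
  | n + 1 => by
    rw [asc, asc_succ_eq_mul_asc_add_one x n, asc]
    push_cast
    ring

lemma asc_add_antidiagonal (a b : ℝ) : ∀ n, asc (a + b) n =
    ∑ ij ∈ antidiagonal n, (n.choose ij.1 : ℝ) * (asc a ij.1 * asc b ij.2)
  | 0 => by simp [asc]
  | n + 1 => by
    rw [Finset.sum_antidiagonal_choose_succ_mul (fun i j => asc a i * asc b j), ← sum_add_distrib,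
      asc, asc_add_antidiagonal a b n, sum_mul]
    refine sum_congr rfl fun ij hij => ?_
    rw [HasAntidiagonal.mem_antidiagonal] at hij
    rw [Nat.choose_symm_of_eq_add hij.symm, asc, asc, ← hij]
    push_cast
    ring

lemma asc_add (a b : ℝ) (n : ℕ) : asc (a + b) n =
    ∑ k ∈ range (n + 1), (n.choose k : ℝ) * (asc a k * asc b (n - k)) := by
  rw [asc_add_antidiagonal, Nat.sum_antidiagonal_eq_sum_range_succ
    (fun i j => (n.choose i : ℝ) * (asc a i * asc b j))]

lemma asc_sum_succ {ι : Type*} [DecidableEq ι] (s : Finset ι) (a : ι → ℝ) (n : ℕ) :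
    asc (∑ i ∈ s, a i) (n + 1) = ∑ i ∈ s, ∑ j ∈ range (n + 1),
      (n.choose j : ℝ) * (asc (a i) (j + 1) * asc (∑ i' ∈ s.erase i, a i') (n - j)) := by
  rw [asc_succ_eq_mul_asc_add_one, sum_mul]
  refine sum_congr rfl fun i hi => ?_
  rw [← add_sum_erase s a hi, add_right_comm, asc_add, mul_sum]
  refine sum_congr rfl fun j _ => ?_
  rw [asc_succ_eq_mul_asc_add_one]
  ring

lemma continuous_asc (n : ℕ) : Continuous (fun x => asc x n) := by
  induction n with
  | zero => exact continuous_const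
  | succ n ih => exact ih.mul (continuous_id.add continuous_const)

lemma abs_asc_le (x : ℝ) (n : ℕ) : |asc x n| ≤ (|x| + n) ^ n := by
  induction n with
  | zero => simp [asc]
  | succ n ih =>
    rw [asc, abs_mul, pow_succ]
    gcongr ?_ * ?_
    · exact ih.trans (pow_le_pow_left₀ (by positivity) (by push_cast; linarith) n)
    · calc |x + n| ≤ |x| + |(n : ℝ)| := abs_add_le _ _
        _ ≤ |x| + (n + 1 : ℕ) := by rw [Nat.abs_cast]; push_cast; linarith

/-- `probLah μ Ys` is by definition `lahOfMoments m` for `m l n = E⟨S_l⟩_n`. -/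
noncomputable def lahOfMoments (m : ℕ → ℕ → ℝ) (n k : ℕ) : ℝ :=
  (k.factorial : ℝ)⁻¹ * ∑ l ∈ range (k + 1), (k.choose l : ℝ) * (-1) ^ (k - l) * m l n

section LahOfMoments

variable {m : ℕ → ℕ → ℝ} {a : ℕ → ℝ}

lemma lahOfMoments_succ_zero (hzero : ∀ n, m 0 (n + 1) = 0) (n : ℕ) :
    lahOfMoments m (n + 1) 0 = 0 := by
  simp [lahOfMoments, hzero]

lemma lahOfMoments_succ_succ (hzero : ∀ n, m 0 (n + 1) = 0)
    (hrec : ∀ l n, m (l + 1) (n + 1) =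
      (l + 1) * ∑ j ∈ range (n + 1), (n.choose j : ℝ) * a j * m l (n - j)) (n k : ℕ) :
    lahOfMoments m (n + 1) (k + 1) =
      ∑ j ∈ range (n + 1), (n.choose j : ℝ) * a j * lahOfMoments m (n - j) k := by
  have hchoose : ∀ l, ((k + 1).choose (l + 1) : ℝ) * (l + 1) = (k + 1) * k.choose l := by
    intro l
    exact_mod_cast (Nat.add_one_mul_choose_eq k l).symm
  have hfact : ((k + 1).factorial : ℝ)⁻¹ * (k + 1) = (k.factorial : ℝ)⁻¹ := by
    rw [Nat.factorial_succ, Nat.cast_mul, mul_inv, mul_right_comm, Nat.cast_add_one,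
      inv_mul_cancel₀ (by positivity), one_mul]
  calc lahOfMoments m (n + 1) (k + 1)
      = ((k + 1).factorial : ℝ)⁻¹ * (k + 1) * ∑ l ∈ range (k + 1), (k.choose l : ℝ) *
          (-1) ^ (k - l) * ∑ j ∈ range (n + 1), (n.choose j : ℝ) * a j * m l (n - j) := by
        rw [lahOfMoments, sum_range_succ', hzero, mul_zero, add_zero, mul_assoc]
        congr 1
        rw [mul_sum]
        refine sum_congr rfl fun l _ => ?_
        rw [hrec, Nat.add_sub_add_right]
        linear_combination (-1) ^ (k - l) *
          (∑ j ∈ range (n + 1), (n.choose j : ℝ) * a j * m l (n - j)) * hchoose l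
    _ = ∑ j ∈ range (n + 1), (n.choose j : ℝ) * a j * lahOfMoments m (n - j) k := by
        simp only [hfact, lahOfMoments, mul_sum]
        rw [sum_comm]
        refine sum_congr rfl fun j _ => sum_congr rfl fun l _ => ?_
        ring

lemma sum_choose_mul_neg_one_pow {k : ℕ} (hk : k ≠ 0) :
    ∑ l ∈ range (k + 1), (k.choose l : ℝ) * (-1) ^ (k - l) = 0 := by
  have h := add_pow (1 : ℝ) (-1) k
  rw [add_neg_cancel, zero_pow hk] at h
  rw [h]
  exact sum_congr rfl fun l _ => by ring

lemma lahOfMoments_eq_zero_of_lt (hone : ∀ l, m l 0 = 1) (hzero : ∀ n, m 0 (n + 1) = 0)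
    (hrec : ∀ l n, m (l + 1) (n + 1) =
      (l + 1) * ∑ j ∈ range (n + 1), (n.choose j : ℝ) * a j * m l (n - j)) :
    ∀ {n k : ℕ}, n < k → lahOfMoments m n k = 0
  | 0, k, hk => by
    simp only [lahOfMoments, hone, mul_one, sum_choose_mul_neg_one_pow hk.ne', mul_zero]
  | n + 1, k + 1, hk => by
    rw [lahOfMoments_succ_succ hzero hrec]
    refine sum_eq_zero fun j _ => ?_
    rw [lahOfMoments_eq_zero_of_lt hone hzero hrec (by omega), mul_zero]

lemma sum_lahOfMoments_succ (hone : ∀ l, m l 0 = 1) (hzero : ∀ n, m 0 (n + 1) = 0)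
    (hrec : ∀ l n, m (l + 1) (n + 1) =
      (l + 1) * ∑ j ∈ range (n + 1), (n.choose j : ℝ) * a j * m l (n - j)) (n : ℕ) (x : ℝ) :
    ∑ k ∈ range (n + 2), lahOfMoments m (n + 1) k * x ^ k = x * ∑ j ∈ range (n + 1),
      (n.choose j : ℝ) * a j * ∑ k ∈ range (n - j + 1), lahOfMoments m (n - j) k * x ^ k := by
  have htrunc : ∀ j ∈ range (n + 1), ∑ k ∈ range (n + 1), lahOfMoments m (n - j) k * x ^ k =
      ∑ k ∈ range (n - j + 1), lahOfMoments m (n - j) k * x ^ k := by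
    intro j hj
    refine (sum_subset (range_subset_range.mpr (by omega)) fun k hk hk' => ?_).symm
    rw [lahOfMoments_eq_zero_of_lt hone hzero hrec (by simp at hk'; omega), zero_mul]
  calc ∑ k ∈ range (n + 2), lahOfMoments m (n + 1) k * x ^ k
      = x * ∑ j ∈ range (n + 1),
          (n.choose j : ℝ) * a j * ∑ k ∈ range (n + 1), lahOfMoments m (n - j) k * x ^ k := by
        rw [sum_range_succ', lahOfMoments_succ_zero hzero, zero_mul, add_zero]
        simp only [lahOfMoments_succ_succ hzero hrec, sum_mul, mul_sum]
        rw [sum_comm]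
        refine sum_congr rfl fun j _ => sum_congr rfl fun k _ => ?_
        ring
    _ = _ := by
        congr 1
        exact sum_congr rfl fun j hj => by rw [htrunc j hj]

end LahOfMoments

section Moments

variable {Ω : Type*} [MeasurableSpace Ω] {μ : Measure Ω}

lemma memLp_of_integrable_exp_mul {Y : Ω → ℝ} {r : ℝ} (hr : 0 < r)
    (hmgf : ∀ t : ℝ, |t| < r → Integrable (fun ω => Real.exp (t * Y ω)) μ) (p : NNReal) :
    MemLp Y p μ := by
  refine memLp_of_mem_interior_integrableExpSet (mem_interior_iff_mem_nhds.mpr ?_) p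
  exact Filter.mem_of_superset (Ioo_mem_nhds (neg_lt_zero.mpr hr) hr)
    fun t ht => hmgf t (abs_lt.mpr ht)

lemma integrable_asc_of_memLp [IsFiniteMeasure μ] {X : Ω → ℝ} {n : ℕ} (hX : MemLp X n μ) :
    Integrable (fun ω => asc (X ω) n) μ := by
  refine (hX.norm.add (memLp_const (n : ℝ))).integrable_norm_pow'.mono'
    ((continuous_asc n).comp_aestronglyMeasurable hX.aestronglyMeasurable)
    (ae_of_all _ fun ω => ?_)
  simpa [abs_of_nonneg (by positivity : 0 ≤ |X ω| + n)] using abs_asc_le (X ω) n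

lemma identDistrib_sum_of_card_eq {ι : Type*} {X : ι → Ω → ℝ} (hindep : iIndepFun X μ)
    (hid : ∀ i j, IdentDistrib (X i) (X j) μ μ) {s t : Finset ι} (hst : #s = #t) :
    IdentDistrib (fun ω => ∑ i ∈ s, X i ω) (fun ω => ∑ i ∈ t, X i ω) μ μ := by
  let e : s ≃ t := equivOfCardEq hst
  have hvec : IdentDistrib (fun ω (i : s) => X i ω) (fun ω (i : s) => X (e i) ω) μ μ :=
    IdentDistrib.pi (fun i => hid i (e i)) (hindep.precomp Subtype.val_injective)
      (hindep.precomp (Subtype.val_injective.comp e.injective))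
  have hsum := hvec.comp (u := fun v : s → ℝ => ∑ i, v i)
    (Finset.measurable_sum _ fun i _ => measurable_pi_apply i)
  convert hsum using 1 <;> funext ω
  · exact (sum_coe_sort s _).symm
  · simp only [Function.comp_apply, e.sum_comp fun i : t => X i ω, sum_coe_sort t (X · ω)]

variable {Y : Ω → ℝ} {Ys : ℕ → Ω → ℝ}

lemma indepFun_asc_asc_sum (hindep : iIndepFun Ys μ) (hid : ∀ j, IdentDistrib (Ys j) Y μ μ)
    {i : ℕ} {t : Finset ℕ} (hi : i ∉ t) (p q : ℕ) :
    IndepFun (fun ω => asc (Ys i ω) p) (fun ω => asc (∑ j ∈ t, Ys j ω) q) μ := by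
  have hind : IndepFun (Ys i) (fun ω => ∑ j ∈ t, Ys j ω) μ := by
    simpa only [Finset.sum_fn] using
      (hindep.indepFun_finsetSum_of_notMem₀ (fun j => (hid j).aemeasurable_fst) hi).symm
  exact hind.comp (continuous_asc p).measurable (continuous_asc q).measurable

lemma integral_asc_mul_asc_sum (hindep : iIndepFun Ys μ) (hid : ∀ j, IdentDistrib (Ys j) Y μ μ)
    {i : ℕ} {t : Finset ℕ} (hi : i ∉ t) (p q : ℕ) :
    ∫ ω, asc (Ys i ω) p * asc (∑ j ∈ t, Ys j ω) q ∂μ =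
      (∫ ω, asc (Y ω) p ∂μ) * ∫ ω, asc (∑ j ∈ range #t, Ys j ω) q ∂μ := by
  have hcard : #t = #(range #t) := (card_range _).symm
  rw [(indepFun_asc_asc_sum hindep hid hi p q).integral_fun_mul_eq_mul_integral
    ((continuous_asc p).comp_aestronglyMeasurable (hid i).aestronglyMeasurable_fst)
    ((continuous_asc q).comp_aestronglyMeasurable
      (t.aestronglyMeasurable_fun_sum fun j _ => (hid j).aestronglyMeasurable_fst))]
  exact congr_arg₂ (· * ·) ((hid i).comp (continuous_asc p).measurable).integral_eq
    ((identDistrib_sum_of_card_eq hindep (fun j k => (hid j).trans (hid k).symm) hcard).comp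
      (continuous_asc q).measurable).integral_eq

variable [IsProbabilityMeasure μ]

lemma integrable_asc_sum (hid : ∀ j, IdentDistrib (Ys j) Y μ μ) (hmom : ∀ p : ℕ, MemLp Y p μ)
    (t : Finset ℕ) (n : ℕ) : Integrable (fun ω => asc (∑ j ∈ t, Ys j ω) n) μ :=
  integrable_asc_of_memLp (memLp_finsetSum t fun j _ => (hid j).memLp_iff.mpr (hmom n))

lemma integrable_asc_mul_asc_sum (hindep : iIndepFun Ys μ)
    (hid : ∀ j, IdentDistrib (Ys j) Y μ μ) (hmom : ∀ p : ℕ, MemLp Y p μ) {i : ℕ}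
    {t : Finset ℕ} (hi : i ∉ t) (p q : ℕ) :
    Integrable (fun ω => asc (Ys i ω) p * asc (∑ j ∈ t, Ys j ω) q) μ :=
  (indepFun_asc_asc_sum hindep hid hi p q).integrable_mul
    (by simpa using integrable_asc_sum hid hmom {i} p) (integrable_asc_sum hid hmom t q)

lemma integral_asc_sum_range_succ_succ (hindep : iIndepFun Ys μ)
    (hid : ∀ j, IdentDistrib (Ys j) Y μ μ) (hmom : ∀ p : ℕ, MemLp Y p μ) (l n : ℕ) :
    ∫ ω, asc (∑ j ∈ range (l + 1), Ys j ω) (n + 1) ∂μ = (l + 1) * ∑ j ∈ range (n + 1),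
      (n.choose j : ℝ) * (∫ ω, asc (Y ω) (j + 1) ∂μ) *
        ∫ ω, asc (∑ i ∈ range l, Ys i ω) (n - j) ∂μ := by
  have hint := fun i j => (integrable_asc_mul_asc_sum hindep hid hmom
    (notMem_erase i (range (l + 1))) (j + 1) (n - j)).const_mul (n.choose j : ℝ)
  simp only [asc_sum_succ]
  rw [integral_finsetSum _ fun i _ => integrable_finsetSum _ fun j _ => hint i j,
    sum_congr rfl fun i hi => ?_, sum_const, card_range, nsmul_eq_mul, Nat.cast_add_one]
  rw [integral_finsetSum _ fun j _ => hint i j]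
  refine sum_congr rfl fun j _ => ?_
  rw [integral_const_mul, integral_asc_mul_asc_sum hindep hid (notMem_erase i _),
    card_erase_of_mem hi, card_range, Nat.add_sub_cancel, mul_assoc]

end Moments

theorem statement_6_general {Ω : Type*} [MeasurableSpace Ω] (μ : Measure Ω) [IsProbabilityMeasure μ]
    (Y : Ω → ℝ) (Ys : ℕ → Ω → ℝ)
    (hid : ∀ j, IdentDistrib (Ys j) Y μ μ)
    (hindep : iIndepFun Ys μ)
    (r : ℝ) (hr : 0 < r)
    (hmgf : ∀ t : ℝ, |t| < r → Integrable (fun ω => Real.exp (t * Y ω)) μ)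
    (n : ℕ) (x : ℝ) :
    probLahBell μ Ys (n + 1) x = x * ∑ k ∈ Finset.range (n + 1),
      (n.choose k : ℝ) * (∫ ω, asc (Y ω) (k + 1) ∂μ) * probLahBell μ Ys (n - k) x := by
  have hmom : ∀ p : ℕ, MemLp Y p μ := fun p => by
    exact_mod_cast memLp_of_integrable_exp_mul hr hmgf p
  have hone : ∀ l, ∫ ω, asc (∑ j ∈ range l, Ys j ω) 0 ∂μ = 1 := fun l => by simp [asc]
  have hzero : ∀ n, ∫ ω, asc (∑ j ∈ range 0, Ys j ω) (n + 1) ∂μ = 0 := fun n => by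
    simp [asc_succ_eq_mul_asc_add_one]
  exact sum_lahOfMoments_succ (m := fun l n => ∫ ω, asc (∑ j ∈ range l, Ys j ω) n ∂μ)
    (a := fun j => ∫ ω, asc (Y ω) (j + 1) ∂μ) hone hzero
    (integral_asc_sum_range_succ_succ hindep hid hmom) n x

theorem statement_6 {Ω : Type*} [MeasurableSpace Ω] (μ : Measure Ω) [IsProbabilityMeasure μ]
    (Y : Ω → ℝ) (Ys : ℕ → Ω → ℝ)
    (hY : Measurable Y) (hYs : ∀ j, Measurable (Ys j))
    (hid : ∀ j, IdentDistrib (Ys j) Y μ μ)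
    (hindep : iIndepFun Ys μ)
    (r : ℝ) (hr : 0 < r)
    (hmgf : ∀ t : ℝ, |t| < r → Integrable (fun ω => Real.exp (t * Y ω)) μ)
    (n : ℕ) (x : ℝ) :
    probLahBell μ Ys (n + 1) x = x * ∑ k ∈ Finset.range (n + 1),
      (n.choose k : ℝ) * (∫ ω, asc (Y ω) (k + 1) ∂μ) * probLahBell μ Ys (n - k) x :=
  statement_6_general μ Y Ys hid hindep r hr hmgf n x
end

section
/- Let $Y$ be a Poisson random variable with parameter $\alpha > 0$. Then for every integer $n \ge 0$ and every real number $x$, $B_n^{(L,Y)}(x) = \sum_{k=0}^{n} \phi_k(x)\, \alpha^k\, L(n,k)$. -/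
open MeasureTheory ProbabilityTheory Finset

/-- The Stirling number of the second kind `{n k} = (1/k!) ∑_{j=0}^k (-1)^{k-j} C(k,j) j^n`. -/
noncomputable def stirling2 (n k : ℕ) : ℝ :=
  (k.factorial : ℝ)⁻¹ * ∑ j ∈ Finset.range (k + 1),
    (-1) ^ (k - j) * (k.choose j : ℝ) * (j : ℝ) ^ n

/-- The Bell polynomial `φ_n(x) = ∑_{k=0}^n {n k} x^k`. -/
noncomputable def bellPoly (n : ℕ) (x : ℝ) : ℝ :=
  ∑ k ∈ Finset.range (n + 1), stirling2 n k * x ^ k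

/-- The unsigned Lah numbers: `L(n,k) = n!/k! · C(n-1,k-1)` for `1 ≤ k ≤ n`,
with `L(0,0) = 1` and `L(n,0) = 0` for `n ≥ 1`. -/
noncomputable def Lah (n k : ℕ) : ℝ :=
  if k = 0 then (if n = 0 then 1 else 0)
  else if k ≤ n then (n.factorial : ℝ) / (k.factorial : ℝ) * ((n - 1).choose (k - 1) : ℝ)
  else 0

/-- The Lah-Bell polynomial `B_n^L(x) = ∑_{k=0}^n L(n,k) x^k`. -/
noncomputable def LahBell (n : ℕ) (x : ℝ) : ℝ :=
  ∑ k ∈ Finset.range (n + 1), Lah n k * x ^ k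

/-!
Each partial sum `S_l` is Poisson with mean `l α`, since independent Poisson laws convolve.
Expanding the rising factorial in falling factorials, `⟨x⟩_n = ∑_m L(n,m) (x)_m`, and using the
factorial moments `E[(Z)_m] = λ^m` of a Poisson variable `Z` of mean `λ`, one gets
`E[⟨S_l⟩_n] = ∑_m L(n,m) α^m l^m`, a polynomial in `l`. The alternating sum defining `L_Y(n,k)` is
the `k`-th forward difference at `0`, which sends `l^m` to `k! {m k}`; summing against `x^k` then
produces the Bell polynomials.
-/

open scoped NNReal Nat

lemma Lah_zero_right (n : ℕ) : Lah n 0 = if n = 0 then 1 else 0 := by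
  simp [Lah]

lemma Lah_eq_zero_of_lt {n k : ℕ} (h : n < k) : Lah n k = 0 := by
  simp [Lah, Nat.ne_zero_of_lt h, not_le.2 h]

lemma Lah_succ_succ_eq_div_mul_choose (n k : ℕ) :
    Lah (n + 1) (k + 1) = (n + 1)! / (k + 1)! * n.choose k := by
  rcases le_or_gt k n with h | h
  · simp [Lah, h]
  · simp [Lah, Nat.choose_eq_zero_of_lt h]

lemma Lah_succ_succ (n k : ℕ) :
    Lah (n + 1) (k + 1) = Lah n k + (n + k + 1) * Lah n (k + 1) := by
  rcases n with _ | n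
  · rcases k with _ | k <;> simp [Lah]
  rcases k with _ | k
  · simp [Lah_succ_succ_eq_div_mul_choose, Lah_zero_right, Nat.factorial_succ]
  simp only [Lah_succ_succ_eq_div_mul_choose]
  have pascal : ((n + 1).choose (k + 1) : ℝ) = n.choose k + n.choose (k + 1) := by
    exact_mod_cast Nat.choose_succ_succ n k
  have absorb : ((n + 1) * n.choose k : ℝ) = (n + 1).choose (k + 1) * (k + 1) := by
    exact_mod_cast Nat.add_one_mul_choose_eq n k
  push_cast [Nat.factorial_succ]
  field_simp
  rw [pascal] at absorb ⊢
  linear_combination absorb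

theorem asc_eq_sum_Lah_mul_descPochhammer (x : ℝ) (n : ℕ) :
    asc x n = ∑ m ∈ range (n + 1), Lah n m * (descPochhammer ℝ m).eval x := by
  induction n with
  | zero => simp [asc, Lah]
  | succ n ih =>
    set D := fun m => (descPochhammer ℝ m).eval x
    have step : ∀ m : ℕ, D m * (x + n) = D (m + 1) + (n + m) * D m := by
      intro m; simp only [D, descPochhammer_succ_eval]; ring
    calc asc x (n + 1)
        = ∑ m ∈ range (n + 1), Lah n m * D (m + 1)
            + ∑ m ∈ range (n + 1), (n + m : ℝ) * Lah n m * D m := by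
          rw [asc, ih, sum_mul, ← sum_add_distrib]
          exact sum_congr rfl fun m _ => by rw [mul_assoc, step]; ring
      _ = ∑ m ∈ range (n + 1), Lah n m * D (m + 1)
            + ∑ m ∈ range (n + 1), (n + m + 1 : ℝ) * Lah n (m + 1) * D (m + 1) := by
          have hzero : (n + (0 : ℕ) : ℝ) * Lah n 0 * D 0 = 0 := by rcases n <;> simp [Lah]
          have htop : (n + n + 1 : ℝ) * Lah n (n + 1) * D (n + 1) = 0 := by
            rw [Lah_eq_zero_of_lt n.lt_succ_self, mul_zero, zero_mul]
          congr 1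
          rw [sum_range_succ', hzero, add_zero, sum_range_succ _ n, htop, add_zero]
          exact sum_congr rfl fun m _ => by push_cast; ring
      _ = ∑ m ∈ range (n + 1), Lah (n + 1) (m + 1) * D (m + 1) := by
          rw [← sum_add_distrib]
          exact sum_congr rfl fun m _ => by rw [Lah_succ_succ]; ring
      _ = ∑ m ∈ range (n + 2), Lah (n + 1) m * D m := by
          simp [sum_range_succ' _ (n + 1), Lah_zero_right]

lemma stirling2_eq_fwdDiff_iter (m k : ℕ) :
    stirling2 m k = (k ! : ℝ)⁻¹ * (fwdDiff 1)^[k] (fun r : ℝ => r ^ m) 0 := by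
  rw [stirling2, fwdDiff_iter_eq_sum_shift]
  congr 1
  exact sum_congr rfl fun j _ => by simp

lemma stirling2_eq_zero_of_lt {m k : ℕ} (h : m < k) : stirling2 m k = 0 := by
  rw [stirling2_eq_fwdDiff_iter, fwdDiff_iter_pow_eq_zero_of_lt h, Pi.zero_apply, mul_zero]

lemma sum_stirling2_mul_pow_eq_bellPoly {m N : ℕ} (h : m ≤ N) (x : ℝ) :
    ∑ k ∈ range (N + 1), stirling2 m k * x ^ k = bellPoly m x := by
  refine (sum_subset (range_subset_range.2 (by omega)) fun k hkN hkm => ?_).symm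
  rw [stirling2_eq_zero_of_lt (by simp at hkN hkm; omega), zero_mul]

lemma probLah_eq_sum_mul_stirling2 {Ω : Type*} [MeasurableSpace Ω] (μ : Measure Ω)
    (Ys : ℕ → Ω → ℝ) (n N : ℕ) (c : ℕ → ℝ)
    (hE : ∀ l : ℕ, ∫ ω, asc (∑ j ∈ range l, Ys j ω) n ∂μ = ∑ m ∈ range N, c m * l ^ m)
    (k : ℕ) :
    probLah μ Ys n k = ∑ m ∈ range N, c m * stirling2 m k := by
  simp only [probLah, stirling2, hE, mul_sum]
  rw [sum_comm]
  refine sum_congr rfl fun m _ => sum_congr rfl fun l _ => by ring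

lemma probLahBell_eq_sum_mul_bellPoly {Ω : Type*} [MeasurableSpace Ω] (μ : Measure Ω)
    (Ys : ℕ → Ω → ℝ) (n : ℕ) (c : ℕ → ℝ)
    (hE : ∀ l : ℕ, ∫ ω, asc (∑ j ∈ range l, Ys j ω) n ∂μ = ∑ m ∈ range (n + 1), c m * l ^ m)
    (x : ℝ) :
    probLahBell μ Ys n x = ∑ m ∈ range (n + 1), c m * bellPoly m x := by
  simp only [probLahBell, probLah_eq_sum_mul_stirling2 μ Ys n (n + 1) c hE, sum_mul]
  rw [sum_comm]
  refine sum_congr rfl fun m hm => ?_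
  rw [← sum_stirling2_mul_pow_eq_bellPoly (Nat.lt_succ_iff.1 (mem_range.1 hm)), mul_sum]
  exact sum_congr rfl fun k _ => by ring

lemma measurable_asc (n : ℕ) : Measurable fun x => asc x n := by
  induction n with
  | zero => exact measurable_const
  | succ n ih => exact ih.mul (measurable_id.add_const _)

open Real in
lemma hasSum_poisson_mul_descFactorial (r : ℝ) (m : ℕ) :
    HasSum (fun i : ℕ => exp (-r) * r ^ i / i ! * i.descFactorial m) (r ^ m) := by
  rw [← hasSum_nat_add_iff' m]
  have hlow : ∑ i ∈ range m, exp (-r) * r ^ i / i ! * (i.descFactorial m : ℝ) = 0 :=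
    sum_eq_zero fun i hi => by
      rw [Nat.descFactorial_eq_zero_iff_lt.2 (mem_range.1 hi), Nat.cast_zero, mul_zero]
  have hshift : ∀ i : ℕ, exp (-r) * r ^ (i + m) / (i + m)! * ((i + m).descFactorial m : ℝ)
      = exp (-r) * r ^ m * (r ^ i / i !) := fun i => by
    have hfac : (i ! * (i + m).descFactorial m : ℝ) = (i + m)! := by
      exact_mod_cast Nat.add_sub_cancel i m ▸ Nat.factorial_mul_descFactorial (Nat.le_add_left m i)
    rw [← hfac, pow_add]
    field_simp
  rw [hlow, sub_zero, funext hshift]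
  have hexp := (NormedSpace.expSeries_div_hasSum_exp r).mul_left (exp (-r) * r ^ m)
  rwa [← exp_eq_exp_ℝ, mul_right_comm, ← exp_add, neg_add_cancel, exp_zero, one_mul] at hexp

lemma integral_asc_map_cast_poissonMeasure (r : ℝ≥0) (n : ℕ) :
    ∫ x, asc x n ∂(poissonMeasure r).map (Nat.cast : ℕ → ℝ)
      = ∑ m ∈ range (n + 1), Lah n m * r ^ m := by
  rw [integral_map measurable_from_nat.aemeasurable (measurable_asc n).aestronglyMeasurable,
    integral_poissonMeasure]
  simp_rw [smul_eq_mul, asc_eq_sum_Lah_mul_descPochhammer, descPochhammer_eval_eq_descFactorial,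
    mul_sum, mul_left_comm _ (Lah n _)]
  exact (hasSum_sum fun m _ => (hasSum_poisson_mul_descFactorial r m).mul_left (Lah n m)).tsum_eq

lemma poissonMeasure_zero : poissonMeasure 0 = Measure.dirac 0 := by
  refine Measure.ext_of_singleton fun i => ?_
  rcases i with _ | i <;> simp [poissonMeasure_singleton]

lemma hasLaw_map_cast_poissonMeasure_of_measure_eq {Ω : Type*} [MeasurableSpace Ω]
    {μ : Measure Ω} [IsProbabilityMeasure μ] {Y : Ω → ℝ} (hY : Measurable Y) {r : ℝ≥0}
    (h : ∀ i : ℕ, μ {ω | Y ω = i} = poissonMeasure r {i}) :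
    HasLaw Y ((poissonMeasure r).map (Nat.cast : ℕ → ℝ)) μ where
  map_eq := by
    -- `Po(ℝ, r)` is the restriction of the law of `Y` to `ℕ`, and is itself a probability measure.
    have hcast := MeasurableEmbedding.natCast (α := ℝ)
    have hcomap : (μ.map Y).comap Nat.cast = poissonMeasure r :=
      Measure.ext_of_singleton fun i => by
        rw [hcast.comap_apply, Set.image_singleton,
          Measure.map_apply hY (measurableSet_singleton _)]
        exact h i
    have : IsProbabilityMeasure (μ.map Y) := Measure.isProbabilityMeasure_map hY.aemeasurable
    refine (Measure.eq_of_le_of_isProbabilityMeasure ?_).symm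
    rw [← hcomap, hcast.map_comap]
    exact Measure.restrict_le_self

lemma iIndepFun.hasLaw_sum_range_map_cast_poissonMeasure {Ω R : Type*} [MeasurableSpace Ω]
    {μ : Measure Ω} [IsProbabilityMeasure μ] [AddCommMonoidWithOne R] [MeasurableSpace R]
    [MeasurableAdd₂ R] {Ys : ℕ → Ω → R} (hYs : ∀ j, Measurable (Ys j)) (hindep : iIndepFun Ys μ)
    {r : ℝ≥0} (hlaw : ∀ j, HasLaw (Ys j) ((poissonMeasure r).map (Nat.cast : ℕ → R)) μ) (l : ℕ) :
    HasLaw (∑ j ∈ range l, Ys j) ((poissonMeasure (l * r)).map (Nat.cast : ℕ → R)) μ := by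
  induction l with
  | zero =>
    rw [sum_range_zero, Nat.cast_zero, zero_mul, poissonMeasure_zero,
      Measure.map_dirac' measurable_from_nat, Nat.cast_zero]
    exact hasLaw_dirac_of_ae_eq (ae_of_all _ fun _ => rfl)
  | succ l ih =>
    rw [sum_range_succ, Nat.cast_succ, add_one_mul]
    exact (hindep.indepFun_sum_range_succ hYs l).hasLaw_add_map_cast_poissonMeasure ih (hlaw l)

theorem statement_13 {Ω : Type*} [MeasurableSpace Ω] (μ : Measure Ω) [IsProbabilityMeasure μ]
    (Y : Ω → ℝ) (Ys : ℕ → Ω → ℝ)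
    (hY : Measurable Y) (hYs : ∀ j, Measurable (Ys j))
    (hid : ∀ j, IdentDistrib (Ys j) Y μ μ)
    (hindep : iIndepFun Ys μ)
    (α : ℝ) (hα : 0 < α)
    (hpois : ∀ i : ℕ, μ {ω | Y ω = (i : ℝ)} =
      ENNReal.ofReal (Real.exp (-α) * α ^ i / i.factorial))
    (n : ℕ) (x : ℝ) :
    probLahBell μ Ys n x = ∑ k ∈ Finset.range (n + 1), bellPoly k x * α ^ k * Lah n k := by
  have hr : (α.toNNReal : ℝ) = α := Real.coe_toNNReal α hα.le
  have hYlaw : HasLaw Y ((poissonMeasure α.toNNReal).map (Nat.cast : ℕ → ℝ)) μ :=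
    hasLaw_map_cast_poissonMeasure_of_measure_eq hY fun i => by
      rw [hpois, poissonMeasure_singleton, hr]
  have hSlaw := iIndepFun.hasLaw_sum_range_map_cast_poissonMeasure hYs hindep
    fun j => ⟨(hYs j).aemeasurable, (hid j).map_eq.trans hYlaw.map_eq⟩
  have hmoment (l : ℕ) : ∫ ω, asc (∑ j ∈ range l, Ys j ω) n ∂μ
      = ∑ m ∈ range (n + 1), Lah n m * α ^ m * l ^ m := by
    have := (hSlaw l).integral_comp (measurable_asc n).aestronglyMeasurable
    simp only [Function.comp_def, Finset.sum_apply] at this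
    rw [this, integral_asc_map_cast_poissonMeasure]
    push_cast [hr]
    exact sum_congr rfl fun m _ => by ring
  rw [probLahBell_eq_sum_mul_bellPoly μ Ys n _ hmoment x]
  exact sum_congr rfl fun m _ => by ring
end
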